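/- arXiv:2309.00529 — 2 statements merged into one kernel-verified Lean document; each statement's English description precedes it below -/
import Mathlib

section
/- Let $1 = a_1 \le a_2 \le \dots \le a_n$ be real numbers and let $\epsilon > 0$. Then the complement $\mathbb{R} \setminus (a_1\mathbb{Z} \cup \dots \cup a_n\mathbb{Z})$ contains infinitely many pairwise disjoint open intervals of length greater than $1 - \epsilon$; more precisely, there exist arbitrarily large integers $k$ such that the open interval $(k-1+\epsilon/2, k-\epsilon/2)$ contains no element of $a_1\mathbb{Z} \cup \dots \cup a_n\mathbb{Z}$. -/
/-- For `1 = a 0 ≤ a 1 ≤ ⋯ ≤ a (n-1)` and `ε > 0`, there exist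
arbitrarily large integers `k` so that the open interval `(k - 1 + ε/2, k - ε/2)`
contains no element of `a₁ℤ ∪ ⋯ ∪ aₙℤ`; in particular the complement of this
union contains infinitely many pairwise disjoint open intervals of length `> 1 - ε`. -/
theorem stmt0 (n : ℕ) (hn : 0 < n) (a : Fin n → ℝ)
    (ha1 : a ⟨0, hn⟩ = 1) (hmono : Monotone a)
    (ε : ℝ) (hε : 0 < ε) (N : ℕ) :
    ∃ k : ℕ, N ≤ k ∧
      ∀ x ∈ Set.Ioo ((k : ℝ) - 1 + ε / 2) ((k : ℝ) - ε / 2),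
        ∀ (j : Fin n) (m : ℤ), x ≠ a j * m := by
  have hδ : (0:ℝ) < ε / 2 := by positivity
  have ha : ∀ j : Fin n, 1 ≤ a j := by
    intro j
    rw [← ha1]
    exact hmono (by simp [Fin.le_def])
  have hamax : ∀ j : Fin n, a j ≤ a ⟨n-1, by omega⟩ :=
    fun j => hmono (by simp [Fin.le_def]; omega)
  set amax := a ⟨n-1, by omega⟩ with hamaxdef
  set B : ℕ := ⌈amax / (ε/2)⌉₊ with hB
  set f : ℕ → Fin n → ℕ := fun i j =>
    (⌊(a j * Int.fract (((i*(N+1) : ℕ) : ℝ) / a j)) / (ε/2)⌋).toNat with hf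
  have hmaps : ∀ i ∈ Finset.range ((B+1)^n + 1),
      f i ∈ Fintype.piFinset (fun _ : Fin n => Finset.range (B+1)) := by
    intro i _
    rw [Fintype.mem_piFinset]
    intro j
    rw [Finset.mem_range, Nat.lt_succ_iff, hf]
    have h1 : (0:ℝ) ≤ Int.fract (((i*(N+1) : ℕ):ℝ) / a j) := Int.fract_nonneg _
    have h2 : Int.fract (((i*(N+1) : ℕ):ℝ) / a j) < 1 := Int.fract_lt_one _
    have hj := ha j
    have hub : a j * Int.fract (((i*(N+1) : ℕ):ℝ) / a j) / (ε/2) ≤ (B : ℝ) := by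
      have : a j * Int.fract (((i*(N+1) : ℕ):ℝ) / a j) ≤ amax := by
        nlinarith [hamax j]
      calc a j * Int.fract (((i*(N+1) : ℕ):ℝ) / a j) / (ε/2) ≤ amax / (ε/2) := by gcongr
        _ ≤ (B : ℝ) := Nat.le_ceil _
    rw [Int.toNat_le]
    calc ⌊a j * Int.fract (((i*(N+1) : ℕ):ℝ) / a j) / (ε/2)⌋ ≤ ⌊(B:ℝ)⌋ :=
          Int.floor_le_floor hub
      _ = (B : ℤ) := Int.floor_natCast B
  have hcard : (Fintype.piFinset (fun _ : Fin n => Finset.range (B+1))).card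
      < (Finset.range ((B+1)^n + 1)).card := by
    rw [Fintype.card_piFinset, Finset.card_range]
    simp [Finset.prod_const, Finset.card_range]
  obtain ⟨i1, hi1, i2, hi2, hne, heq⟩ :=
    Finset.exists_ne_map_eq_of_card_lt_of_maps_to hcard hmaps
  -- WLOG i1 < i2
  wlog hlt : i1 < i2 generalizing i1 i2
  · exact this i2 hi2 i1 hi1 hne.symm heq.symm (by omega)
  refine ⟨(i2 - i1) * (N+1), by nlinarith [Nat.one_le_iff_ne_zero.2 (by omega : i2 - i1 ≠ 0)], ?_⟩
  intro x hx j m hxm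
  -- find d with |(k:ℝ) - d * a j| < ε/2
  have hj := ha j
  have hjpos : (0:ℝ) < a j := by linarith
  set x1 : ℝ := ((i1*(N+1) : ℕ) : ℝ) with hx1
  set x2 : ℝ := ((i2*(N+1) : ℕ) : ℝ) with hx2
  have hk : (((i2 - i1) * (N+1) : ℕ) : ℝ) = x2 - x1 := by
    rw [hx1, hx2]
    push_cast [Nat.sub_mul, Nat.cast_sub (Nat.mul_le_mul_right _ hlt.le)]
    ring
  have hfeq : ⌊(a j * Int.fract (x2 / a j)) / (ε/2)⌋ = ⌊(a j * Int.fract (x1 / a j)) / (ε/2)⌋ := by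
    have h1 : (0:ℝ) ≤ a j * Int.fract (x1 / a j) / (ε/2) := by
      have := Int.fract_nonneg (x1 / a j); positivity
    have h2 : (0:ℝ) ≤ a j * Int.fract (x2 / a j) / (ε/2) := by
      have := Int.fract_nonneg (x2 / a j); positivity
    have := congrFun heq j
    rw [hf] at this
    beta_reduce at this
    rw [← hx1, ← hx2] at this
    have h1' := Int.floor_nonneg.2 h1
    have h2' := Int.floor_nonneg.2 h2
    omega
  have hdiff : |a j * Int.fract (x2 / a j) - a j * Int.fract (x1 / a j)| < ε/2 := by
    have h := Int.abs_sub_lt_one_of_floor_eq_floor hfeq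
    have : a j * Int.fract (x2 / a j) - a j * Int.fract (x1 / a j)
        = (ε/2) * (a j * Int.fract (x2 / a j) / (ε/2) - a j * Int.fract (x1 / a j) / (ε/2)) := by
      field_simp
    rw [this, abs_mul, abs_of_pos hδ]
    nlinarith [abs_nonneg (a j * Int.fract (x2 / a j) / (ε/2) - a j * Int.fract (x1 / a j) / (ε/2))]
  set d : ℤ := ⌊x2 / a j⌋ - ⌊x1 / a j⌋ with hd
  have hfr : ∀ y : ℝ, a j * Int.fract (y / a j) = y - ⌊y / a j⌋ * a j := by
    intro y
    rw [Int.fract]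
    field_simp
  have hkd : |(((i2 - i1) * (N+1) : ℕ) : ℝ) - (d:ℝ) * a j| < ε/2 := by
    rw [hk, hd]
    have := hdiff
    rw [hfr x2, hfr x1] at this
    push_cast
    convert this using 2
    ring
  rw [abs_lt] at hkd
  obtain ⟨hx_lo, hx_hi⟩ := hx
  -- x = a j * m
  rcases le_or_gt (d:ℝ) (m:ℝ) with hm | hm
  · -- m ≥ d : x ≥ d * a j > k - ε/2
    have : a j * (m:ℝ) ≥ a j * (d:ℝ) := by nlinarith
    nlinarith
  · -- m ≤ d - 1
    have hm' : (m:ℝ) ≤ (d:ℝ) - 1 := by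
      have h1 : m < d := by exact_mod_cast hm
      have : m ≤ d - 1 := by omega
      exact_mod_cast this
    have : a j * (m:ℝ) ≤ a j * ((d:ℝ) - 1) := by nlinarith
    nlinarith
end

section
/- Let $\mathscr{E} \subset \mathbb{R}$ be the set of endpoints of bars of length $\ge \delta$ in a barcode $\mathfrak{B}_1$, and let $K$ be the minimal cardinality of a finite set $\mathscr{F} \subset \mathbb{R}$ whose closed $\delta/2$-neighborhood contains $\mathscr{E}$. If a barcode $\mathfrak{B}_2$ has bottleneck distance less than $\delta/2$ from $\mathfrak{B}_1$, then the set of finite endpoints of bars of $\mathfrak{B}_2$ has cardinality at least $K$. -/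
/-- A barcode: a collection of intervals `(a x, b x)` with extended-real
endpoints (possibly of zero length). -/
structure BarcodeW where
  X : Type
  a : X → EReal
  b : X → EReal
  le : ∀ x, a x ≤ b x

/-- Two barcodes are within distance `δ`: after adding zero-length bars
(indexed by `E1`, `E2`, located at real points `e1`, `e2`) there is a bijection
of bars moving each endpoint by at most `δ`. -/
def WithinDist (B1 B2 : BarcodeW) (δ : ℝ) : Prop :=
  ∃ (E1 E2 : Type) (e1 : E1 → ℝ) (e2 : E2 → ℝ) (m : B1.X ⊕ E1 ≃ B2.X ⊕ E2),
    ∀ z : B1.X ⊕ E1,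
      (Sum.elim B2.a (fun e => ((e2 e : ℝ) : EReal)) (m z) ≤
        Sum.elim B1.a (fun e => ((e1 e : ℝ) : EReal)) z + (δ : EReal)) ∧
      (Sum.elim B1.a (fun e => ((e1 e : ℝ) : EReal)) z ≤
        Sum.elim B2.a (fun e => ((e2 e : ℝ) : EReal)) (m z) + (δ : EReal)) ∧
      (Sum.elim B2.b (fun e => ((e2 e : ℝ) : EReal)) (m z) ≤
        Sum.elim B1.b (fun e => ((e1 e : ℝ) : EReal)) z + (δ : EReal)) ∧
      (Sum.elim B1.b (fun e => ((e1 e : ℝ) : EReal)) z ≤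
        Sum.elim B2.b (fun e => ((e2 e : ℝ) : EReal)) (m z) + (δ : EReal))

/-- The set of finite endpoints of bars of length at least `δ` in `B`. -/
def longEndpoints (B : BarcodeW) (δ : ℝ) : Set ℝ :=
  {t : ℝ | ∃ x : B.X, B.a x + (δ : EReal) ≤ B.b x ∧
    (B.a x = (t : EReal) ∨ B.b x = (t : EReal))}

/-- The set of finite endpoints of bars of `B`. -/
def endpoints (B : BarcodeW) : Set ℝ :=
  {t : ℝ | ∃ x : B.X, B.a x = (t : EReal) ∨ B.b x = (t : EReal)}

lemma key_finite (u : EReal) (c η : ℝ) (h1 : u ≤ (c : EReal) + (η : EReal))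
    (h2 : (c : EReal) ≤ u + (η : EReal)) : ∃ s : ℝ, u = (s : EReal) ∧ |c - s| ≤ η := by
  induction u using EReal.rec with
  | bot =>
    exfalso
    rw [EReal.bot_add] at h2
    exact (EReal.coe_ne_bot c) (le_bot_iff.mp h2)
  | coe r =>
    refine ⟨r, rfl, ?_⟩
    rw [← EReal.coe_add, EReal.coe_le_coe_iff] at h1 h2
    rw [abs_le]
    constructor <;> linarith
  | top =>
    exfalso
    rw [← EReal.coe_add, top_le_iff] at h1
    exact (EReal.coe_ne_top _) h1

lemma near_endpoint (B1 B2 : BarcodeW) (δ : ℝ) (hδ : 0 < δ)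
    (η : ℝ) (hη : η < δ / 2) (hW : WithinDist B1 B2 η) :
    ∀ t ∈ longEndpoints B1 δ, ∃ s ∈ endpoints B2, |t - s| ≤ η := by
  obtain ⟨E1, E2, e1, e2, m, hm⟩ := hW
  rintro t ⟨x, hlen, ht⟩
  obtain ⟨h1, h2, h3, h4⟩ := hm (Sum.inl x)
  cases hmx : m (Sum.inl x) with
  | inl y =>
    rw [hmx] at h1 h2 h3 h4
    simp only [Sum.elim_inl] at h1 h2 h3 h4
    rcases ht with ha | hb
    · rw [ha] at h1 h2
      obtain ⟨s, hs, habs⟩ := key_finite (B2.a y) t η h1 h2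
      exact ⟨s, ⟨y, Or.inl hs⟩, habs⟩
    · rw [hb] at h3 h4
      obtain ⟨s, hs, habs⟩ := key_finite (B2.b y) t η h3 h4
      exact ⟨s, ⟨y, Or.inr hs⟩, habs⟩
  | inr e =>
    exfalso
    rw [hmx] at h1 h2 h3 h4
    simp only [Sum.elim_inl, Sum.elim_inr] at h1 h2 h3 h4
    obtain ⟨sa, hsa, habsa⟩ := key_finite (B1.a x) (e2 e) η h2 h1
    obtain ⟨sb, hsb, habsb⟩ := key_finite (B1.b x) (e2 e) η h4 h3
    rw [hsa, hsb, ← EReal.coe_add, EReal.coe_le_coe_iff] at hlen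
    rw [abs_le] at habsa habsb
    linarith

/-- Let `ℰ` be the set of endpoints of bars of length `≥ δ` of
`𝔅₁` and let `K` be the minimal cardinality of a finite set whose closed
`δ/2`-neighborhood contains `ℰ`.  If `𝔅₂` is within bottleneck distance
`< δ/2` of `𝔅₁`, then `𝔅₂` has at least `K` distinct finite bar endpoints. -/
theorem stmt9 (B1 B2 : BarcodeW) (δ : ℝ) (hδ : 0 < δ) (K : ℕ)
    (hKex : ∃ F : Finset ℝ,
      (longEndpoints B1 δ ⊆ ⋃ c ∈ F, Metric.closedBall c (δ / 2)) ∧ F.card = K)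
    (hKmin : ∀ F : Finset ℝ,
      (longEndpoints B1 δ ⊆ ⋃ c ∈ F, Metric.closedBall c (δ / 2)) → K ≤ F.card)
    (η : ℝ) (hη : η < δ / 2) (hW : WithinDist B1 B2 η) :
    (K : Cardinal) ≤ Cardinal.mk (endpoints B2) := by
  have hnear := near_endpoint B1 B2 δ hδ η hη hW
  by_cases hfin : (endpoints B2).Finite
  · have hcov : longEndpoints B1 δ ⊆ ⋃ c ∈ hfin.toFinset, Metric.closedBall c (δ / 2) := by
      intro t ht
      obtain ⟨s, hs, habs⟩ := hnear t ht
      refine Set.mem_biUnion (hfin.mem_toFinset.mpr hs) ?_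
      rw [Metric.mem_closedBall, Real.dist_eq]
      linarith [abs_nonneg (t - s)]
    have hK := hKmin hfin.toFinset hcov
    calc (K : Cardinal) ≤ (hfin.toFinset.card : Cardinal) := Nat.cast_le.mpr hK
      _ = Cardinal.mk hfin.toFinset := Cardinal.mk_coe_finset.symm
      _ = Cardinal.mk (endpoints B2) := Cardinal.mk_congr (Equiv.setCongr hfin.coe_toFinset)

  · haveI := Set.Infinite.to_subtype (hfin)
    exact le_trans (Cardinal.nat_lt_aleph0 K).le (Cardinal.aleph0_le_mk _)
end
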